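/- Let T : L²(D) → L²(D) be a self-adjoint bounded linear operator with a kernel T(x,y) ≥ 0, and suppose e^{−λt} = max{⟨Tξ,ξ⟩ : ‖ξ‖₂ = 1}. Let T̃ be another self-adjoint operator with kernel T̃(x,y) satisfying T̃(x,y) ≤ T(x,y) for a.e. x,y, with strict inequality on a set of positive measure, and let φ̃ > 0 a.e. with ‖φ̃‖₂ = 1 satisfy T̃φ̃ = e^{−λ̃t}φ̃. Then e^{−λ̃t} < e^{−λt}, i.e., λ̃ > λ. -/
import Mathlib


open MeasureTheory

/-- Strict monotonicity of the principal eigenvalue in the kernel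
(Lemma 4.2(ii)): if the kernel `K̃` is dominated by `K`, strictly on a set of
positive measure, `φ̃ > 0` is a normalized eigenfunction of `K̃` with eigenvalue
`e^{−λ̃t}`, and `e^{−λt}` dominates the quadratic form of `K` on the unit
sphere, then `e^{−λ̃t} < e^{−λt}`, i.e. `λ < λ̃`. -/
theorem principal_eigenvalue_strict_mono {α : Type*} [MeasurableSpace α]
    (ν : Measure α) [SigmaFinite ν]
    (K Ktil : α → α → ℝ) (t lam lamtil : ℝ) (ht : 0 < t)
    (hK0 : ∀ x y, 0 ≤ K x y)
    (hKtil0 : ∀ x y, 0 ≤ Ktil x y)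
    (hle : ∀ x y, Ktil x y ≤ K x y)
    (hstrict : 0 < (ν.prod ν) {p : α × α | Ktil p.1 p.2 < K p.1 p.2})
    (φ : α → ℝ) (hφmeas : Measurable φ)
    (hφpos : ∀ᵐ x ∂ν, 0 < φ x)
    (hφnorm : ∫ x, (φ x) ^ 2 ∂ν = 1)
    (heig : ∀ᵐ x ∂ν, ∫ y, Ktil x y * φ y ∂ν = Real.exp (-(lamtil * t)) * φ x)
    (hvar : ∀ ξ : α → ℝ, (∫ x, (ξ x) ^ 2 ∂ν) = 1 →
      ∫ x, ∫ y, ξ x * K x y * ξ y ∂ν ∂ν ≤ Real.exp (-(lam * t)))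
    (hintK : Integrable (fun p : α × α => φ p.1 * K p.1 p.2 * φ p.2) (ν.prod ν))
    (hintKtil : Integrable (fun p : α × α => φ p.1 * Ktil p.1 p.2 * φ p.2) (ν.prod ν)) :
    Real.exp (-(lamtil * t)) < Real.exp (-(lam * t)) ∧ lam < lamtil := by
  -- a.e. positivity of φ on the product
  have hA : ∀ᵐ p ∂(ν.prod ν), 0 < φ p.1 ∧ 0 < φ p.2 := by
    have h1 : (ν.prod ν) ({x | ¬ 0 < φ x} ×ˢ (Set.univ : Set α)) = 0 := by
      rw [Measure.prod_prod]
      have h0 : ν {x | ¬ 0 < φ x} = 0 := hφpos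
      rw [h0, zero_mul]
    have h2 : (ν.prod ν) ((Set.univ : Set α) ×ˢ {x | ¬ 0 < φ x}) = 0 := by
      rw [Measure.prod_prod]
      have h0 : ν {x | ¬ 0 < φ x} = 0 := hφpos
      rw [h0, mul_zero]
    have : (ν.prod ν) {p : α × α | ¬ (0 < φ p.1 ∧ 0 < φ p.2)} = 0 := by
      refine measure_mono_null ?_ (measure_union_null h1 h2)
      intro p hp
      rcases not_and_or.mp hp with h | h
      · exact Or.inl ⟨h, trivial⟩
      · exact Or.inr ⟨trivial, h⟩
    exact this
  -- strict inequality of quadratic forms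
  have hdiff_nonneg : 0 ≤ᵐ[ν.prod ν] fun p : α × α =>
      φ p.1 * K p.1 p.2 * φ p.2 - φ p.1 * Ktil p.1 p.2 * φ p.2 := by
    filter_upwards [hA] with p hp
    have : φ p.1 * Ktil p.1 p.2 * φ p.2 ≤ φ p.1 * K p.1 p.2 * φ p.2 := by
      apply mul_le_mul_of_nonneg_right _ hp.2.le
      exact mul_le_mul_of_nonneg_left (hle _ _) hp.1.le
    simp only [Pi.zero_apply]
    linarith
  have hposint : 0 < ∫ p, (φ p.1 * K p.1 p.2 * φ p.2 - φ p.1 * Ktil p.1 p.2 * φ p.2)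
      ∂(ν.prod ν) := by
    rw [integral_pos_iff_support_of_nonneg_ae hdiff_nonneg (hintK.sub hintKtil)]
    have hsub : {p : α × α | Ktil p.1 p.2 < K p.1 p.2} ∩
        {p : α × α | 0 < φ p.1 ∧ 0 < φ p.2} ⊆
        Function.support fun p : α × α =>
          φ p.1 * K p.1 p.2 * φ p.2 - φ p.1 * Ktil p.1 p.2 * φ p.2 := by
      rintro p ⟨hpl, hp1, hp2⟩
      have : φ p.1 * Ktil p.1 p.2 * φ p.2 < φ p.1 * K p.1 p.2 * φ p.2 := by
        apply mul_lt_mul_of_pos_right _ hp2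
        exact mul_lt_mul_of_pos_left hpl hp1
      simp only [Function.mem_support]
      intro h; linarith [sub_eq_zero.mp h]
    refine lt_of_lt_of_le ?_ (measure_mono hsub)
    have hAc : (ν.prod ν) {p : α × α | ¬ (0 < φ p.1 ∧ 0 < φ p.2)} = 0 := hA
    have := measure_union_le (μ := ν.prod ν)
      ({p : α × α | Ktil p.1 p.2 < K p.1 p.2} ∩ {p : α × α | 0 < φ p.1 ∧ 0 < φ p.2})
      {p : α × α | ¬ (0 < φ p.1 ∧ 0 < φ p.2)}
    have hcover : {p : α × α | Ktil p.1 p.2 < K p.1 p.2} ⊆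
        ({p : α × α | Ktil p.1 p.2 < K p.1 p.2} ∩ {p : α × α | 0 < φ p.1 ∧ 0 < φ p.2}) ∪
        {p : α × α | ¬ (0 < φ p.1 ∧ 0 < φ p.2)} := by
      intro p hp
      by_cases h : 0 < φ p.1 ∧ 0 < φ p.2
      · exact Or.inl ⟨hp, h⟩
      · exact Or.inr h
    calc (0 : ENNReal) < (ν.prod ν) {p : α × α | Ktil p.1 p.2 < K p.1 p.2} := hstrict
      _ ≤ _ := measure_mono hcover
      _ ≤ _ + _ := this
      _ = (ν.prod ν) ({p : α × α | Ktil p.1 p.2 < K p.1 p.2} ∩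
            {p : α × α | 0 < φ p.1 ∧ 0 < φ p.2}) := by rw [hAc, add_zero]
  have e1 := MeasureTheory.integral_integral (μ := ν) (ν := ν)
    (f := fun x y => φ x * Ktil x y * φ y) hintKtil
  have e2 := MeasureTheory.integral_integral (μ := ν) (ν := ν)
    (f := fun x y => φ x * K x y * φ y) hintK
  have hKtil_eq : ∫ x, ∫ y, φ x * Ktil x y * φ y ∂ν ∂ν
      = Real.exp (-(lamtil * t)) := by
    have : ∀ᵐ x ∂ν, ∫ y, φ x * Ktil x y * φ y ∂ν
        = Real.exp (-(lamtil * t)) * (φ x ^ 2) := by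
      filter_upwards [heig] with x hx
      have : ∫ y, φ x * Ktil x y * φ y ∂ν = φ x * ∫ y, Ktil x y * φ y ∂ν := by
        rw [← integral_const_mul]
        congr 1; ext y; ring
      rw [this, hx]; ring
    rw [integral_congr_ae this, integral_const_mul, hφnorm, mul_one]
  have hK_le : ∫ x, ∫ y, φ x * K x y * φ y ∂ν ∂ν ≤ Real.exp (-(lam * t)) :=
    hvar φ hφnorm
  have hlt : Real.exp (-(lamtil * t)) < Real.exp (-(lam * t)) := by
    rw [integral_sub hintK hintKtil, sub_pos] at hposint
    calc Real.exp (-(lamtil * t)) = ∫ x, ∫ y, φ x * Ktil x y * φ y ∂ν ∂ν :=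
          hKtil_eq.symm
      _ = ∫ p, φ p.1 * Ktil p.1 p.2 * φ p.2 ∂(ν.prod ν) := e1
      _ < ∫ p, φ p.1 * K p.1 p.2 * φ p.2 ∂(ν.prod ν) := hposint
      _ = ∫ x, ∫ y, φ x * K x y * φ y ∂ν ∂ν := e2.symm
      _ ≤ Real.exp (-(lam * t)) := hK_le
  refine ⟨hlt, ?_⟩
  have := Real.exp_lt_exp.mp hlt
  have h2 : lam * t < lamtil * t := by linarith
  exact lt_of_mul_lt_mul_right h2 ht.le
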